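/- Let n, m ∈ ℕ, let U* ⊆ ℝ^m be nonempty, let f : ℝ^n × ℝ^m → ℝ^n, let V : ℝ^n → ℝ be nonnegative, let α > 0, ε ≥ 0, χ ≥ 0, η ≥ 0 and x̂ ∈ ℝ^n. Let y ∈ ℝ^n be an ε-minimizer of the inf-convolution infimum at x̂, let ỹ ∈ ℝ^n satisfy ‖ỹ − y‖ ≤ χ, and set ζ̃ := (x̂ − ỹ)/α². Suppose L_f ≥ 0 is such that ‖f(x̂, u) − f(ỹ, u)‖ ≤ L_f ‖x̂ − ỹ‖ for all u ∈ U*, and suppose the control action κ ∈ U* satisfies ⟨ζ̃, f(ỹ, κ)⟩ ≤ inf_{u ∈ U*} ⟨ζ̃, f(ỹ, u)⟩ + η. Then ⟨ζ̃, f(x̂, κ)⟩ ≤ inf_{u ∈ U*} ⟨ζ̃, f(ỹ, u)⟩ + η + L_f · (2/α²) ( χ² + 2α² ( V(x̂) − V(y) + ε ) ). -/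

import Mathlib

open scoped RealInnerProductSpace

/-- Inf-convolution (Moreau–Yosida regularization) of `V` with parameter `α`. -/
noncomputable def infConv {n : ℕ} (V : EuclideanSpace ℝ (Fin n) → ℝ) (α : ℝ)
    (x : EuclideanSpace ℝ (Fin n)) : ℝ :=
  ⨅ y : EuclideanSpace ℝ (Fin n), (V y + ‖y - x‖ ^ 2 / (2 * α ^ 2))

/-- `y` is an `ε`-minimizer of the inf-convolution infimum at `x`. -/
def IsEpsMinimizer {n : ℕ} (V : EuclideanSpace ℝ (Fin n) → ℝ) (α ε : ℝ)
    (x y : EuclideanSpace ℝ (Fin n)) : Prop :=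
  V y + ‖y - x‖ ^ 2 / (2 * α ^ 2) ≤ infConv V α x + ε

/-!
An `ε`-minimizer `y` at `x̂` pays at most `V x̂ + ε` in the infimum (compare with the
candidate `x̂` itself), so `‖y - x̂‖² ≤ 2α² (V x̂ - V y + ε)`; with `‖ỹ - y‖ ≤ χ` this bounds
`‖x̂ - ỹ‖²`. Replacing `f ỹ κ` by `f x̂ κ` in `⟪ζ̃, ·⟫` costs at most
`‖ζ̃‖ · L_f ‖x̂ - ỹ‖ = L_f ‖x̂ - ỹ‖² / α²` by Cauchy–Schwarz and the Lipschitz bound.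
-/

lemma norm_sub_sq_le_two_mul {E : Type*} [SeminormedAddCommGroup E] (a b c : E) :
    ‖a - c‖ ^ 2 ≤ 2 * (‖a - b‖ ^ 2 + ‖b - c‖ ^ 2) :=
  (pow_le_pow_left₀ (norm_nonneg _) (norm_sub_le_norm_sub_add_norm_sub a b c) 2).trans
    add_sq_le

lemma real_inner_smul_le_of_norm_sub_le {E : Type*} [NormedAddCommGroup E]
    [InnerProductSpace ℝ E] {c L : ℝ} (hc : 0 ≤ c) {v a b : E} (hab : ‖a - b‖ ≤ L * ‖v‖) :
    ⟪c • v, a⟫ ≤ ⟪c • v, b⟫ + L * (c * ‖v‖ ^ 2) := by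
  have hcs : ⟪c • v, a - b⟫ ≤ c * ‖v‖ * (L * ‖v‖) :=
    calc ⟪c • v, a - b⟫ ≤ ‖c • v‖ * ‖a - b‖ := real_inner_le_norm _ _
      _ = c * ‖v‖ * ‖a - b‖ := by rw [norm_smul, Real.norm_of_nonneg hc]
      _ ≤ c * ‖v‖ * (L * ‖v‖) := by gcongr
  rw [inner_sub_right] at hcs
  linarith

section InfConv

variable {n : ℕ} {V : EuclideanSpace ℝ (Fin n) → ℝ} {α ε : ℝ}

lemma infConv_le (hV : BddBelow (Set.range V)) (x y : EuclideanSpace ℝ (Fin n)) :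
    infConv V α x ≤ V y + ‖y - x‖ ^ 2 / (2 * α ^ 2) := by
  obtain ⟨b, hb⟩ := hV
  refine ciInf_le ⟨b, ?_⟩ y
  rintro _ ⟨z, rfl⟩
  exact le_add_of_le_of_nonneg (hb ⟨z, rfl⟩) (by positivity)

lemma infConv_le_self (hV : BddBelow (Set.range V)) (x : EuclideanSpace ℝ (Fin n)) :
    infConv V α x ≤ V x := by
  simpa using infConv_le (α := α) hV x x

lemma IsEpsMinimizer.norm_sub_sq_le {x y : EuclideanSpace ℝ (Fin n)}
    (hy : IsEpsMinimizer V α ε x y) (hV : BddBelow (Set.range V)) (hα : α ≠ 0) :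
    ‖y - x‖ ^ 2 ≤ 2 * α ^ 2 * (V x - V y + ε) := by
  have hle : V y + ‖y - x‖ ^ 2 / (2 * α ^ 2) ≤ V x + ε :=
    le_trans hy (add_le_add_left (infConv_le_self hV x) ε)
  have hquot : ‖y - x‖ ^ 2 / (2 * α ^ 2) ≤ V x - V y + ε := by linarith
  rwa [div_le_iff₀ (by positivity), mul_comm] at hquot

end InfConv

theorem stmt9_general (n m : ℕ) (Ustar : Set (EuclideanSpace ℝ (Fin m)))
    (f : EuclideanSpace ℝ (Fin n) → EuclideanSpace ℝ (Fin m) → EuclideanSpace ℝ (Fin n))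
    (V : EuclideanSpace ℝ (Fin n) → ℝ) (hVnn : ∀ z, 0 ≤ V z)
    (α ε χ η : ℝ) (hα : 0 < α)
    (xhat y ytil : EuclideanSpace ℝ (Fin n))
    (hy : IsEpsMinimizer V α ε xhat y) (hytil : ‖ytil - y‖ ≤ χ)
    (L_f : ℝ) (hLf : 0 ≤ L_f)
    (hfLip : ∀ u ∈ Ustar, ‖f xhat u - f ytil u‖ ≤ L_f * ‖xhat - ytil‖)
    (κ : EuclideanSpace ℝ (Fin m)) (hκ : κ ∈ Ustar)
    (hκopt : ⟪(α ^ 2)⁻¹ • (xhat - ytil), f ytil κ⟫ ≤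
      sInf ((fun u => ⟪(α ^ 2)⁻¹ • (xhat - ytil), f ytil u⟫) '' Ustar) + η) :
    ⟪(α ^ 2)⁻¹ • (xhat - ytil), f xhat κ⟫ ≤
      sInf ((fun u => ⟪(α ^ 2)⁻¹ • (xhat - ytil), f ytil u⟫) '' Ustar) + η
        + L_f * ((2 / α ^ 2) * (χ ^ 2 + 2 * α ^ 2 * (V xhat - V y + ε))) := by
  have hV : BddBelow (Set.range V) := ⟨0, by rintro _ ⟨z, rfl⟩; exact hVnn z⟩
  have hdist : ‖xhat - ytil‖ ^ 2 ≤ 2 * (χ ^ 2 + 2 * α ^ 2 * (V xhat - V y + ε)) := by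
    have hyx := hy.norm_sub_sq_le hV hα.ne'
    have hyt : ‖y - ytil‖ ^ 2 ≤ χ ^ 2 := by
      rw [norm_sub_rev]; exact pow_le_pow_left₀ (norm_nonneg _) hytil 2
    rw [norm_sub_rev] at hyx
    linarith [norm_sub_sq_le_two_mul xhat y ytil]
  calc ⟪(α ^ 2)⁻¹ • (xhat - ytil), f xhat κ⟫
      ≤ ⟪(α ^ 2)⁻¹ • (xhat - ytil), f ytil κ⟫ + L_f * ((α ^ 2)⁻¹ * ‖xhat - ytil‖ ^ 2) :=
        real_inner_smul_le_of_norm_sub_le (by positivity) (hfLip κ hκ)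
    _ ≤ _ := by
        rw [div_mul_eq_mul_div, div_eq_inv_mul]
        gcongr

theorem stmt9 (n m : ℕ) (Ustar : Set (EuclideanSpace ℝ (Fin m))) (hUne : Ustar.Nonempty)
    (f : EuclideanSpace ℝ (Fin n) → EuclideanSpace ℝ (Fin m) → EuclideanSpace ℝ (Fin n))
    (V : EuclideanSpace ℝ (Fin n) → ℝ) (hVnn : ∀ z, 0 ≤ V z)
    (α ε χ η : ℝ) (hα : 0 < α) (hε : 0 ≤ ε) (hχ : 0 ≤ χ) (hη : 0 ≤ η)
    (xhat y ytil : EuclideanSpace ℝ (Fin n))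
    (hy : IsEpsMinimizer V α ε xhat y) (hytil : ‖ytil - y‖ ≤ χ)
    (L_f : ℝ) (hLf : 0 ≤ L_f)
    (hfLip : ∀ u ∈ Ustar, ‖f xhat u - f ytil u‖ ≤ L_f * ‖xhat - ytil‖)
    (κ : EuclideanSpace ℝ (Fin m)) (hκ : κ ∈ Ustar)
    (hκopt : ⟪(α ^ 2)⁻¹ • (xhat - ytil), f ytil κ⟫ ≤
      sInf ((fun u => ⟪(α ^ 2)⁻¹ • (xhat - ytil), f ytil u⟫) '' Ustar) + η) :
    ⟪(α ^ 2)⁻¹ • (xhat - ytil), f xhat κ⟫ ≤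
      sInf ((fun u => ⟪(α ^ 2)⁻¹ • (xhat - ytil), f ytil u⟫) '' Ustar) + η
        + L_f * ((2 / α ^ 2) * (χ ^ 2 + 2 * α ^ 2 * (V xhat - V y + ε))) :=
  stmt9_general n m Ustar f V hVnn α ε χ η hα xhat y ytil hy hytil L_f hLf hfLip κ hκ hκopt
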